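/- For every n ≥ 0 there exists an indecomposable representation M of Q with dimension vector (n+1, n, n+1, n+1) together with a short exact sequence of representations 0 → P₂ ⊕ P₄ⁿ → P₁ⁿ⁺¹ → M → 0. -/

import Mathlib

/-! The representation is `M = (kⁿ⁺¹, kⁿ, kⁿ⁺¹, kⁿ⁺¹; t, id, s, id)`, where `t` forgets the first
coordinate and `s` appends a zero coordinate, so that `N = s ∘ t` is the nilpotent shift of
`kⁿ⁺¹`, whose kernel is the line of the first basis vector. An endomorphism of `M` is determined
by its component at vertex 1, which commutes with `N`. An idempotent commuting with `N` is `0` or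
`1`: its image and its kernel are `N`-stable, so each of them, if nonzero, contains the kernel line
of `N`, and they cannot both do so. By transport of the projection onto a summand, every
decomposition `M ≅ A ⊕ B` yields such an idempotent, so `M` is indecomposable.

The projective cover `P₁ⁿ⁺¹ → M` is the identity at vertices 1 and 3, `t` at vertex 2 and
`(u, v) ↦ N u + v` at vertex 4. Its kernel is `P₂ ⊕ P₄ⁿ`, embedded through the first basis vector at
vertex 2 and through `u ↦ (u, -N u)` at vertex 4 (identifying `k × kⁿ` with `kⁿ⁺¹`); exactness
follows from injectivity, surjectivity and a dimension count. -/

variable (k : Type) [Field k]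

/-- A finite-dimensional representation of the quiver `Q` with vertices `1,2,3,4`
and arrows `a : 1 → 2`, `b : 1 → 3`, `c : 2 → 4`, `d : 3 → 4`. -/
structure QRep where
  V1 : Type
  V2 : Type
  V3 : Type
  V4 : Type
  [acg1 : AddCommGroup V1]
  [acg2 : AddCommGroup V2]
  [acg3 : AddCommGroup V3]
  [acg4 : AddCommGroup V4]
  [mod1 : Module k V1]
  [mod2 : Module k V2]
  [mod3 : Module k V3]
  [mod4 : Module k V4]
  [fin1 : FiniteDimensional k V1]
  [fin2 : FiniteDimensional k V2]
  [fin3 : FiniteDimensional k V3]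
  [fin4 : FiniteDimensional k V4]
  ma : V1 →ₗ[k] V2
  mb : V1 →ₗ[k] V3
  mc : V2 →ₗ[k] V4
  md : V3 →ₗ[k] V4

attribute [instance] QRep.acg1 QRep.acg2 QRep.acg3 QRep.acg4
  QRep.mod1 QRep.mod2 QRep.mod3 QRep.mod4
  QRep.fin1 QRep.fin2 QRep.fin3 QRep.fin4

variable {k}

/-- Morphisms of representations of `Q`. -/
@[ext]
structure QHom (M N : QRep k) where
  f1 : M.V1 →ₗ[k] N.V1
  f2 : M.V2 →ₗ[k] N.V2
  f3 : M.V3 →ₗ[k] N.V3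
  f4 : M.V4 →ₗ[k] N.V4
  comm_a : f2 ∘ₗ M.ma = N.ma ∘ₗ f1
  comm_b : f3 ∘ₗ M.mb = N.mb ∘ₗ f1
  comm_c : f4 ∘ₗ M.mc = N.mc ∘ₗ f2
  comm_d : f4 ∘ₗ M.md = N.md ∘ₗ f3

/-- Two representations are isomorphic iff there is a morphism all of whose
components are bijective. -/
def QIso (M N : QRep k) : Prop :=
  ∃ f : QHom M N, Function.Bijective f.f1 ∧ Function.Bijective f.f2 ∧
    Function.Bijective f.f3 ∧ Function.Bijective f.f4

/-- The zero representation(s). -/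
def QRep.IsZeroRep (M : QRep k) : Prop :=
  Subsingleton M.V1 ∧ Subsingleton M.V2 ∧ Subsingleton M.V3 ∧ Subsingleton M.V4

/-- Vertexwise direct sum of representations. -/
def QRep.dsum (M N : QRep k) : QRep k where
  V1 := M.V1 × N.V1
  V2 := M.V2 × N.V2
  V3 := M.V3 × N.V3
  V4 := M.V4 × N.V4
  ma := M.ma.prodMap N.ma
  mb := M.mb.prodMap N.mb
  mc := M.mc.prodMap N.mc
  md := M.md.prodMap N.md

/-- Direct sum of `n` copies of a representation. -/
def QRep.dpow (M : QRep k) (n : ℕ) : QRep k where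
  V1 := Fin n → M.V1
  V2 := Fin n → M.V2
  V3 := Fin n → M.V3
  V4 := Fin n → M.V4
  ma := M.ma.compLeft (Fin n)
  mb := M.mb.compLeft (Fin n)
  mc := M.mc.compLeft (Fin n)
  md := M.md.compLeft (Fin n)

/-- A representation is indecomposable if it is nonzero and not isomorphic to a
direct sum of two nonzero representations. -/
def QRep.Indecomposable (M : QRep k) : Prop :=
  ¬ M.IsZeroRep ∧ ∀ A B : QRep k, QIso M (A.dsum B) → A.IsZeroRep ∨ B.IsZeroRep

/-- `0 → A → B → C → 0` is short exact (vertexwise). -/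
def QShortExact {A B C : QRep k} (f : QHom A B) (g : QHom B C) : Prop :=
  (Function.Injective f.f1 ∧ Function.Injective f.f2 ∧
    Function.Injective f.f3 ∧ Function.Injective f.f4) ∧
  (Function.Surjective g.f1 ∧ Function.Surjective g.f2 ∧
    Function.Surjective g.f3 ∧ Function.Surjective g.f4) ∧
  (LinearMap.range f.f1 = LinearMap.ker g.f1 ∧ LinearMap.range f.f2 = LinearMap.ker g.f2 ∧
    LinearMap.range f.f3 = LinearMap.ker g.f3 ∧ LinearMap.range f.f4 = LinearMap.ker g.f4)

variable (k)

/-- The `n×n` Jordan block with eigenvalue `lam`, as a linear endomorphism of `kⁿ`. -/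
def jordan (n : ℕ) (lam : k) : (Fin n → k) →ₗ[k] (Fin n → k) :=
  Matrix.mulVecLin (Matrix.of fun i j : Fin n =>
    if i = j then lam else if (i : ℕ) + 1 = (j : ℕ) then 1 else 0)

/-- The representation `M_n(λ) = (kⁿ,kⁿ,kⁿ,kⁿ; id,id,id,J_n(λ))`. -/
def Mlam (n : ℕ) (lam : k) : QRep k where
  V1 := Fin n → k
  V2 := Fin n → k
  V3 := Fin n → k
  V4 := Fin n → k
  ma := LinearMap.id
  mb := LinearMap.id
  mc := LinearMap.id
  md := jordan k n lam

/-- The indecomposable projective `P₁ = (k,k,k,k²)`. -/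
def P1 : QRep k where
  V1 := k
  V2 := k
  V3 := k
  V4 := k × k
  ma := LinearMap.id
  mb := LinearMap.id
  mc := LinearMap.inl k k k
  md := LinearMap.inr k k k

/-- The indecomposable projective `P₂ = (0,k,0,k)`. -/
def P2 : QRep k where
  V1 := Fin 0 → k
  V2 := k
  V3 := Fin 0 → k
  V4 := k
  ma := 0
  mb := 0
  mc := LinearMap.id
  md := 0

/-- The indecomposable projective `P₃ = (0,0,k,k)`. -/
def P3 : QRep k where
  V1 := Fin 0 → k
  V2 := Fin 0 → k
  V3 := k
  V4 := k
  ma := 0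
  mb := 0
  mc := 0
  md := LinearMap.id

/-- The indecomposable projective `P₄ = (0,0,0,k)`. -/
def P4 : QRep k where
  V1 := Fin 0 → k
  V2 := Fin 0 → k
  V3 := Fin 0 → k
  V4 := k
  ma := 0
  mb := 0
  mc := 0
  md := 0

open Module

section LinearAlgebra

variable {k} {V : Type} [AddCommGroup V] [Module k V]

theorem Module.End.exists_pow_apply_ne_zero_and_apply_eq_zero {N : Module.End k V}
    (hN : IsNilpotent N) {u : V} (hu : u ≠ 0) :
    ∃ m : ℕ, (N ^ m) u ≠ 0 ∧ N ((N ^ m) u) = 0 := by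
  obtain ⟨p, hp⟩ := hN
  by_contra! h
  have hpow : ∀ m, (N ^ m) u ≠ 0 := by
    intro m
    induction m with
    | zero => simpa using hu
    | succ m ih => simpa [pow_succ', Module.End.mul_apply] using h m ih
  exact hpow p (by simp [hp])

theorem Module.End.exists_mem_ker_apply_eq_self {N e : Module.End k V} (hN : IsNilpotent N)
    (he : IsIdempotentElem e) (hc : Commute e N) (he0 : e ≠ 0) :
    ∃ z ∈ LinearMap.ker N, z ≠ 0 ∧ e z = z := by
  obtain ⟨v, hv⟩ : ∃ v, e v ≠ 0 := by
    by_contra! h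
    exact he0 (LinearMap.ext h)
  obtain ⟨m, hm, hker⟩ := exists_pow_apply_ne_zero_and_apply_eq_zero hN hv
  refine ⟨(N ^ m) (e v), hker, hm, ?_⟩
  rw [← Module.End.mul_apply, (hc.pow_right m).eq, Module.End.mul_apply,
    ← Module.End.mul_apply e e, he.eq]

theorem Module.End.eq_zero_or_eq_one_of_commute {N e : Module.End k V} (hN : IsNilpotent N)
    {δ : V} (hker : LinearMap.ker N ≤ k ∙ δ) (he : IsIdempotentElem e) (hc : Commute e N) :
    e = 0 ∨ e = 1 := by
  by_contra! h
  obtain ⟨z, hzN, hz0, hez⟩ := exists_mem_ker_apply_eq_self hN he hc h.1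
  obtain ⟨z', hzN', hz0', hez'⟩ := exists_mem_ker_apply_eq_self hN he.one_sub
    ((Commute.one_left N).sub_left hc) (sub_ne_zero.2 h.2.symm)
  obtain ⟨a, rfl⟩ := Submodule.mem_span_singleton.1 (hker hzN)
  obtain ⟨b, rfl⟩ := Submodule.mem_span_singleton.1 (hker hzN')
  have ha : a ≠ 0 := by rintro rfl; simp at hz0
  have heδ : e δ = δ := smul_right_injective V ha (by simpa using hez)
  apply hz0'
  simpa [heδ] using hez'.symm

theorem LinearEquiv.symm_conjRingEquiv_comp {V₁ V₂ W₁ W₂ : Type} [AddCommGroup V₁]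
    [AddCommGroup V₂] [AddCommGroup W₁] [AddCommGroup W₂] [Module k V₁] [Module k V₂]
    [Module k W₁] [Module k W₂] (E₁ : V₁ ≃ₗ[k] W₁) (E₂ : V₂ ≃ₗ[k] W₂) {f : V₁ →ₗ[k] V₂}
    {g : W₁ →ₗ[k] W₂} (h : E₂.toLinearMap ∘ₗ f = g ∘ₗ E₁) {p₁ : Module.End k W₁}
    {p₂ : Module.End k W₂} (hp : p₂ ∘ₗ g = g ∘ₗ p₁) :
    E₂.symm.conjRingEquiv p₂ ∘ₗ f = f ∘ₗ E₁.symm.conjRingEquiv p₁ := by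
  ext x
  apply E₂.injective
  have hx := LinearMap.congr_fun h
  have hpx := LinearMap.congr_fun hp
  simp only [LinearMap.comp_apply, LinearEquiv.coe_coe] at hx hpx
  simp [hx, hpx]

variable (k) in
def LinearMap.fstProj (A B : Type) [AddCommGroup A] [AddCommGroup B] [Module k A] [Module k B] :
    Module.End k (A × B) :=
  inl k A B ∘ₗ fst k A B

variable {A B : Type} [AddCommGroup A] [AddCommGroup B] [Module k A] [Module k B]

theorem LinearMap.fstProj_comp_prodMap {A' B' : Type} [AddCommGroup A'] [AddCommGroup B']
    [Module k A'] [Module k B'] (f : A →ₗ[k] A') (g : B →ₗ[k] B') :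
    fstProj k A' B' ∘ₗ f.prodMap g = f.prodMap g ∘ₗ fstProj k A B := by
  ext <;> simp [fstProj]

theorem LinearMap.isIdempotentElem_fstProj : IsIdempotentElem (fstProj k A B) := by
  ext <;> simp [fstProj, Module.End.mul_apply]

theorem subsingleton_of_conj_fstProj_eq_zero (E : V ≃ₗ[k] A × B)
    (h : E.symm.conjRingEquiv (LinearMap.fstProj k A B) = 0) : Subsingleton A := by
  rw [map_eq_zero_iff _ (RingEquiv.injective _)] at h
  exact subsingleton_of_forall_eq 0 fun a => by
    simpa [LinearMap.fstProj] using congrArg Prod.fst (LinearMap.congr_fun h (a, 0))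

theorem subsingleton_of_conj_fstProj_eq_one (E : V ≃ₗ[k] A × B)
    (h : E.symm.conjRingEquiv (LinearMap.fstProj k A B) = 1) : Subsingleton B := by
  rw [map_eq_one_iff _ (RingEquiv.injective _)] at h
  exact subsingleton_of_forall_eq 0 fun b => by
    simpa [LinearMap.fstProj] using (congrArg Prod.snd (LinearMap.congr_fun h (0, b))).symm

@[simp]
theorem LinearMap.zero_compLeft (I : Type) : (0 : A →ₗ[k] B).compLeft I = 0 :=
  rfl

theorem LinearMap.range_eq_ker_of_finrank_add_eq {U W : Type} [AddCommGroup U] [AddCommGroup W]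
    [Module k U] [Module k W] [FiniteDimensional k V] {f : U →ₗ[k] V} {g : V →ₗ[k] W}
    (hf : Function.Injective f) (hg : Function.Surjective g) (hgf : g ∘ₗ f = 0)
    (hdim : finrank k U + finrank k W = finrank k V) : range f = ker g := by
  refine Submodule.eq_of_le_of_finrank_eq (range_le_ker_iff.2 hgf) ?_
  have := g.finrank_range_add_finrank_ker
  rw [range_eq_top.2 hg, finrank_top, ← hdim] at this
  rw [finrank_range_of_inj hf]
  omega

end LinearAlgebra

namespace QHom

variable {k} {M N P : QRep k}

def comp (g : QHom N P) (f : QHom M N) : QHom M P where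
  f1 := g.f1 ∘ₗ f.f1
  f2 := g.f2 ∘ₗ f.f2
  f3 := g.f3 ∘ₗ f.f3
  f4 := g.f4 ∘ₗ f.f4
  comm_a := by rw [LinearMap.comp_assoc, f.comm_a, ← LinearMap.comp_assoc, g.comm_a]; rfl
  comm_b := by rw [LinearMap.comp_assoc, f.comm_b, ← LinearMap.comp_assoc, g.comm_b]; rfl
  comm_c := by rw [LinearMap.comp_assoc, f.comm_c, ← LinearMap.comp_assoc, g.comm_c]; rfl
  comm_d := by rw [LinearMap.comp_assoc, f.comm_d, ← LinearMap.comp_assoc, g.comm_d]; rfl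

instance : Zero (QHom M N) :=
  ⟨⟨0, 0, 0, 0, by simp, by simp, by simp, by simp⟩⟩

instance : Monoid (QHom M M) where
  mul := comp
  one := ⟨LinearMap.id, LinearMap.id, LinearMap.id, LinearMap.id, rfl, rfl, rfl, rfl⟩
  mul_assoc _ _ _ := rfl
  one_mul _ := rfl
  mul_one _ := rfl

end QHom

namespace QRep

variable {k} {M A B : QRep k}

noncomputable def summandProj (φ : QHom M (A.dsum B)) (h1 : Function.Bijective φ.f1)
    (h2 : Function.Bijective φ.f2) (h3 : Function.Bijective φ.f3)
    (h4 : Function.Bijective φ.f4) : QHom M M where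
  f1 := (LinearEquiv.ofBijective φ.f1 h1).symm.conjRingEquiv (LinearMap.fstProj k A.V1 B.V1)
  f2 := (LinearEquiv.ofBijective φ.f2 h2).symm.conjRingEquiv (LinearMap.fstProj k A.V2 B.V2)
  f3 := (LinearEquiv.ofBijective φ.f3 h3).symm.conjRingEquiv (LinearMap.fstProj k A.V3 B.V3)
  f4 := (LinearEquiv.ofBijective φ.f4 h4).symm.conjRingEquiv (LinearMap.fstProj k A.V4 B.V4)
  comm_a := LinearEquiv.symm_conjRingEquiv_comp _ _ φ.comm_a (LinearMap.fstProj_comp_prodMap _ _)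
  comm_b := LinearEquiv.symm_conjRingEquiv_comp _ _ φ.comm_b (LinearMap.fstProj_comp_prodMap _ _)
  comm_c := LinearEquiv.symm_conjRingEquiv_comp _ _ φ.comm_c (LinearMap.fstProj_comp_prodMap _ _)
  comm_d := LinearEquiv.symm_conjRingEquiv_comp _ _ φ.comm_d (LinearMap.fstProj_comp_prodMap _ _)

theorem isIdempotentElem_summandProj (φ : QHom M (A.dsum B)) (h1 : Function.Bijective φ.f1)
    (h2 : Function.Bijective φ.f2) (h3 : Function.Bijective φ.f3)
    (h4 : Function.Bijective φ.f4) : IsIdempotentElem (summandProj φ h1 h2 h3 h4) :=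
  QHom.ext (LinearMap.isIdempotentElem_fstProj.map _) (LinearMap.isIdempotentElem_fstProj.map _)
    (LinearMap.isIdempotentElem_fstProj.map _) (LinearMap.isIdempotentElem_fstProj.map _)

theorem Indecomposable.of_isIdempotentElem (h0 : ¬ M.IsZeroRep)
    (h : ∀ e : QHom M M, IsIdempotentElem e → e = 0 ∨ e = 1) : M.Indecomposable := by
  refine ⟨h0, fun A B ⟨φ, h1, h2, h3, h4⟩ => ?_⟩
  rcases h _ (isIdempotentElem_summandProj φ h1 h2 h3 h4) with he | he
  · exact .inl ⟨subsingleton_of_conj_fstProj_eq_zero _ (congrArg QHom.f1 he),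
      subsingleton_of_conj_fstProj_eq_zero _ (congrArg QHom.f2 he),
      subsingleton_of_conj_fstProj_eq_zero _ (congrArg QHom.f3 he),
      subsingleton_of_conj_fstProj_eq_zero _ (congrArg QHom.f4 he)⟩
  · exact .inr ⟨subsingleton_of_conj_fstProj_eq_one _ (congrArg QHom.f1 he),
      subsingleton_of_conj_fstProj_eq_one _ (congrArg QHom.f2 he),
      subsingleton_of_conj_fstProj_eq_one _ (congrArg QHom.f3 he),
      subsingleton_of_conj_fstProj_eq_one _ (congrArg QHom.f4 he)⟩

end QRep

variable {k} in
theorem QShortExact.of_finrank_add_eq {A B C : QRep k} {f : QHom A B} {g : QHom B C}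
    (hf : Function.Injective f.f1 ∧ Function.Injective f.f2 ∧
      Function.Injective f.f3 ∧ Function.Injective f.f4)
    (hg : Function.Surjective g.f1 ∧ Function.Surjective g.f2 ∧
      Function.Surjective g.f3 ∧ Function.Surjective g.f4)
    (hgf : g.comp f = 0)
    (hdim : finrank k A.V1 + finrank k C.V1 = finrank k B.V1 ∧
      finrank k A.V2 + finrank k C.V2 = finrank k B.V2 ∧
      finrank k A.V3 + finrank k C.V3 = finrank k B.V3 ∧
      finrank k A.V4 + finrank k C.V4 = finrank k B.V4) :
    QShortExact f g :=
  ⟨hf, hg, LinearMap.range_eq_ker_of_finrank_add_eq hf.1 hg.1 (congrArg QHom.f1 hgf) hdim.1,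
    LinearMap.range_eq_ker_of_finrank_add_eq hf.2.1 hg.2.1 (congrArg QHom.f2 hgf) hdim.2.1,
    LinearMap.range_eq_ker_of_finrank_add_eq hf.2.2.1 hg.2.2.1 (congrArg QHom.f3 hgf) hdim.2.2.1,
    LinearMap.range_eq_ker_of_finrank_add_eq hf.2.2.2 hg.2.2.2 (congrArg QHom.f4 hgf) hdim.2.2.2⟩

noncomputable section

variable (n : ℕ)

def shift : Module.End k (Fin (n + 1) → k) :=
  Function.ExtendByZero.linearMap k Fin.castSucc ∘ₗ LinearMap.funLeft k k Fin.succ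

def shiftRep : QRep k where
  V1 := Fin (n + 1) → k
  V2 := Fin n → k
  V3 := Fin (n + 1) → k
  V4 := Fin (n + 1) → k
  ma := LinearMap.funLeft k k Fin.succ
  mb := LinearMap.id
  mc := Function.ExtendByZero.linearMap k Fin.castSucc
  md := LinearMap.id

def shiftRepCover4 : (Fin (n + 1) → k × k) →ₗ[k] Fin (n + 1) → k :=
  shift k n ∘ₗ (LinearMap.fst k k k).compLeft _ + (LinearMap.snd k k k).compLeft _

def shiftRepSyzygy2 : k × (Fin n → Fin 0 → k) →ₗ[k] Fin (n + 1) → k :=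
  (Fin.consLinearEquiv k fun _ => k).toLinearMap ∘ₗ LinearMap.inl k k _ ∘ₗ LinearMap.fst k k _

def shiftRepSyzygy4 : k × (Fin n → k) →ₗ[k] Fin (n + 1) → k × k :=
  ((LinearMap.inl k k k).compLeft _ - (LinearMap.inr k k k).compLeft _ ∘ₗ shift k n) ∘ₗ
    (Fin.consLinearEquiv k fun _ => k).toLinearMap

variable {k n}

theorem shift_apply_castSucc (x : Fin (n + 1) → k) (j : Fin n) :
    shift k n x j.castSucc = x j.succ :=
  (Fin.castSucc_injective n).extend_apply _ _ j

theorem shift_apply_last (x : Fin (n + 1) → k) : shift k n x (Fin.last n) = 0 :=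
  Function.extend_apply' _ _ _ fun ⟨j, hj⟩ => Fin.castSucc_ne_last j hj

theorem shift_consLinearEquiv_zero (t : k) :
    shift k n (Fin.consLinearEquiv k (fun _ => k) (t, 0)) = 0 := by
  have h : LinearMap.funLeft k k Fin.succ (Fin.consLinearEquiv k (fun _ => k) (t, 0)) =
      (0 : Fin n → k) :=
    rfl
  rw [shift, LinearMap.comp_apply, h, map_zero]

theorem shift_pow_apply_eq_zero (m : ℕ) (x : Fin (n + 1) → k) (i : Fin (n + 1))
    (h : n < i + m) : (shift k n ^ m) x i = 0 := by
  induction m generalizing i with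
  | zero => exact absurd h (by omega)
  | succ m ih =>
    rw [pow_succ', Module.End.mul_apply]
    rcases Fin.eq_castSucc_or_eq_last i with ⟨j, rfl⟩ | rfl
    · rw [shift_apply_castSucc]
      exact ih _ (by simp at h ⊢; omega)
    · exact shift_apply_last _

theorem isNilpotent_shift : IsNilpotent (shift k n) :=
  ⟨n + 1, LinearMap.ext fun x => funext fun i => shift_pow_apply_eq_zero _ x i (by omega)⟩

theorem ker_shift_le_span_single : LinearMap.ker (shift k n) ≤ k ∙ Pi.single 0 1 := by
  intro x hx
  refine Submodule.mem_span_singleton.2 ⟨x 0, funext fun i => ?_⟩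
  refine Fin.cases (by simp) (fun j => ?_) i
  rw [← shift_apply_castSucc x j, LinearMap.mem_ker.1 hx]
  simp [Fin.succ_ne_zero]

theorem shiftRep_hom_ext {N : QRep k} {e e' : QHom (shiftRep k n) N} (h : e.f1 = e'.f1) :
    e = e' := by
  have h3 : e.f3 = e'.f3 := by
    have h3 := e.comm_b
    rwa [h, ← e'.comm_b] at h3
  have h4 : e.f4 = e'.f4 := by
    have h4 := e.comm_d
    rwa [h3, ← e'.comm_d] at h4
  have h2 : e.f2 = e'.f2 := by
    have h2 := e.comm_a
    rw [h, ← e'.comm_a] at h2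
    exact (LinearMap.cancel_right (LinearMap.funLeft_surjective_of_injective k k _
      (Fin.succ_injective n))).1 h2
  exact QHom.ext h h2 h3 h4

theorem commute_f1_shift (e : QHom (shiftRep k n) (shiftRep k n)) :
    Commute (e.f1 : Module.End k (Fin (n + 1) → k)) (shift k n) := by
  refine LinearMap.ext fun x => ?_
  have h14 : e.f1 (shift k n x) = e.f4 (shift k n x) :=
    (LinearMap.congr_fun e.comm_b _).symm.trans (LinearMap.congr_fun e.comm_d _).symm
  have h4 : e.f4 (shift k n x) = shift k n (e.f1 x) :=
    (LinearMap.congr_fun e.comm_c _).trans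
      (congrArg (shiftRep k n).mc (LinearMap.congr_fun e.comm_a x))
  exact h14.trans h4

theorem shiftRep_indecomposable : (shiftRep k n).Indecomposable := by
  refine .of_isIdempotentElem (fun h => not_subsingleton (Fin (n + 1) → k) h.1) fun e he => ?_
  rcases Module.End.eq_zero_or_eq_one_of_commute (e := (e.f1 : Module.End k (Fin (n + 1) → k)))
    isNilpotent_shift ker_shift_le_span_single (congrArg QHom.f1 he) (commute_f1_shift e)
    with h | h
  · exact .inl (shiftRep_hom_ext h)
  · exact .inr (shiftRep_hom_ext h)

theorem shiftRepCover4_comp_inl :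
    shiftRepCover4 k n ∘ₗ (LinearMap.inl k k k).compLeft _ = shift k n := by
  refine LinearMap.ext fun x => ?_
  simp only [shiftRepCover4, LinearMap.comp_apply, LinearMap.add_apply]
  exact add_zero _

theorem shiftRepCover4_comp_inr :
    shiftRepCover4 k n ∘ₗ (LinearMap.inr k k k).compLeft _ = LinearMap.id := by
  refine LinearMap.ext fun x => ?_
  simp only [shiftRepCover4, LinearMap.comp_apply, LinearMap.add_apply]
  exact (congrArg (· + x) (map_zero (shift k n))).trans (zero_add x)

theorem shiftRepSyzygy4_comp_prodMap :
    shiftRepSyzygy4 k n ∘ₗ LinearMap.id.prodMap ((0 : (Fin 0 → k) →ₗ[k] k).compLeft (Fin n)) =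
      (LinearMap.inl k k k).compLeft _ ∘ₗ shiftRepSyzygy2 k n := by
  refine LinearMap.ext fun x => funext fun i => ?_
  simp [shiftRepSyzygy4, shiftRepSyzygy2, shift_consLinearEquiv_zero, Function.comp_def]

theorem shiftRepSyzygy2_injective : Function.Injective (shiftRepSyzygy2 k n) := by
  intro p q h
  have h' : ((p.1, 0) : k × (Fin n → k)) = (q.1, 0) :=
    (Fin.consLinearEquiv k fun _ => k).injective h
  exact Prod.ext (Prod.mk.inj h').1 (Subsingleton.elim _ _)

theorem shiftRepSyzygy4_injective : Function.Injective (shiftRepSyzygy4 k n) := fun p q h =>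
  (Fin.consLinearEquiv k _).injective <| funext fun i => by
    simpa [shiftRepSyzygy4] using congrArg (fun w => (w i).1) h

variable (k n)

def shiftRepCover : QHom ((P1 k).dpow (n + 1)) (shiftRep k n) where
  f1 := LinearMap.id
  f2 := LinearMap.funLeft k k Fin.succ
  f3 := LinearMap.id
  f4 := shiftRepCover4 k n
  comm_a := rfl
  comm_b := rfl
  comm_c := shiftRepCover4_comp_inl
  comm_d := shiftRepCover4_comp_inr

def shiftRepSyzygy : QHom ((P2 k).dsum ((P4 k).dpow n)) ((P1 k).dpow (n + 1)) where
  f1 := 0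
  f2 := shiftRepSyzygy2 k n
  f3 := 0
  f4 := shiftRepSyzygy4 k n
  comm_a := LinearMap.ext fun _ =>
    (map_zero (shiftRepSyzygy2 k n)).trans (map_zero ((LinearMap.id : k →ₗ[k] k).compLeft _)).symm
  comm_b := by simp
  comm_c := shiftRepSyzygy4_comp_prodMap
  comm_d := LinearMap.ext fun _ =>
    (map_zero (shiftRepSyzygy4 k n)).trans (map_zero ((LinearMap.inr k k k).compLeft _)).symm

variable {k n}

theorem shiftRepCover_comp_shiftRepSyzygy :
    (shiftRepCover k n).comp (shiftRepSyzygy k n) = 0 := by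
  refine QHom.ext (LinearMap.ext fun _ => rfl) (LinearMap.ext fun _ => rfl)
    (LinearMap.ext fun _ => rfl) ?_
  change shiftRepCover4 k n ∘ₗ shiftRepSyzygy4 k n = 0
  rw [shiftRepSyzygy4, ← LinearMap.comp_assoc, LinearMap.comp_sub, ← LinearMap.comp_assoc,
    shiftRepCover4_comp_inl, shiftRepCover4_comp_inr]
  simp

theorem shiftRep_shortExact : QShortExact (shiftRepSyzygy k n) (shiftRepCover k n) := by
  have hV1 : Subsingleton ((Fin 0 → k) × (Fin n → Fin 0 → k)) := inferInstance
  refine .of_finrank_add_eq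
    ⟨fun x y _ => hV1.elim x y, shiftRepSyzygy2_injective, fun x y _ => hV1.elim x y,
      shiftRepSyzygy4_injective⟩
    ⟨Function.surjective_id, LinearMap.funLeft_surjective_of_injective k k _ (Fin.succ_injective n),
      Function.surjective_id, fun y => ⟨_, LinearMap.congr_fun shiftRepCover4_comp_inr y⟩⟩
    shiftRepCover_comp_shiftRepSyzygy ⟨?_, ?_, ?_, ?_⟩
  · change finrank k ((Fin 0 → k) × (Fin n → Fin 0 → k)) + finrank k (Fin (n + 1) → k) =
      finrank k (Fin (n + 1) → k)
    simp [finrank_prod, finrank_pi_fintype]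
  · change finrank k (k × (Fin n → Fin 0 → k)) + finrank k (Fin n → k) =
      finrank k (Fin (n + 1) → k)
    simp [finrank_prod, finrank_pi_fintype]
    omega
  · change finrank k ((Fin 0 → k) × (Fin n → Fin 0 → k)) + finrank k (Fin (n + 1) → k) =
      finrank k (Fin (n + 1) → k)
    simp [finrank_prod, finrank_pi_fintype]
  · change finrank k (k × (Fin n → k)) + finrank k (Fin (n + 1) → k) =
      finrank k (Fin (n + 1) → k × k)
    simp [finrank_prod, finrank_pi_fintype]
    ring

end

/-- there is an indecomposable representation `M` of `Q` with the
given dimension vector together with a short exact sequence as indicated. -/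
theorem stmt9 (k : Type) [Field k] (n : ℕ) :
    ∃ M : QRep k, M.Indecomposable ∧
      Module.finrank k M.V1 = n+1 ∧ Module.finrank k M.V2 = n ∧
      Module.finrank k M.V3 = n+1 ∧ Module.finrank k M.V4 = n+1 ∧
      ∃ (f : QHom ((P2 k).dsum ((P4 k).dpow n)) ((P1 k).dpow (n+1))) (g : QHom ((P1 k).dpow (n+1)) M), QShortExact f g :=
  ⟨shiftRep k n, shiftRep_indecomposable, finrank_fin_fun k, finrank_fin_fun k, finrank_fin_fun k,
    finrank_fin_fun k, shiftRepSyzygy k n, shiftRepCover k n, shiftRep_shortExact⟩
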